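/- Let p be a prime, e ≥ 1, and A, B ∈ R = ℤ/p^eℤ. Then the number of pairs (X, Z) ∈ R² with p ∣ X, p ∣ Z and Z = X³ + A·X·Z² + B·Z³ is exactly p^(e−1). (Equivalently, the fiber of the canonical projection over the point at infinity has p^(e−1) points.) -/
import Mathlib

lemma card_dvd_subtype {p : ℕ} (hp : p.Prime) {e : ℕ} (he : 1 ≤ e) :
    Nat.card {x : ZMod (p ^ e) // (p : ZMod (p ^ e)) ∣ x} = p ^ (e - 1) := by
  haveI : NeZero (p ^ e) := ⟨pow_ne_zero e hp.ne_zero⟩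
  haveI : NeZero (p ^ (e - 1)) := ⟨pow_ne_zero _ hp.ne_zero⟩
  have hep : p ^ e = p * p ^ (e - 1) := by
    conv_lhs => rw [show e = (e - 1) + 1 from (Nat.succ_pred_eq_of_pos he).symm, pow_succ']
  have φ : ZMod (p ^ (e - 1)) ≃ {x : ZMod (p ^ e) // (p : ZMod (p ^ e)) ∣ x} := by
    refine Equiv.ofBijective
      (fun a => ⟨(p : ZMod (p ^ e)) * (a.val : ZMod (p ^ e)), dvd_mul_right _ _⟩) ⟨?_, ?_⟩
    · intro a b hab
      simp only [Subtype.mk.injEq, ← Nat.cast_mul] at hab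
      rw [ZMod.natCast_eq_natCast_iff, hep] at hab
      have h1 := Nat.ModEq.mul_left_cancel' hp.ne_zero hab
      exact ZMod.val_injective _ (Nat.ModEq.eq_of_lt_of_lt h1 (ZMod.val_lt a) (ZMod.val_lt b))
    · rintro ⟨x, y, rfl⟩
      refine ⟨(y.val : ZMod (p ^ (e - 1))), ?_⟩
      ext
      simp only
      rw [ZMod.val_natCast, ← Nat.cast_mul]
      conv_rhs => rw [show y = ((y.val : ℕ) : ZMod (p ^ e)) by
        simp [ZMod.natCast_val, ZMod.cast_id]]
      rw [← Nat.cast_mul, ZMod.natCast_eq_natCast_iff]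
      have h1 : p * (y.val % p ^ (e - 1)) ≡ p * y.val [MOD p * p ^ (e - 1)] :=
        Nat.ModEq.mul_left' _ (Nat.mod_modEq _ _)
      rwa [← hep] at h1
  rw [Nat.card_congr φ.symm, Nat.card_zmod]

/-- The fiber over the point at infinity of the projection
`E(ℤ/p^eℤ) → E(𝔽_p)` has exactly `p^(e-1)` points. -/
theorem card_fiber_at_infinity_eq_pow
    {p : ℕ} (hp : p.Prime) {e : ℕ} (he : 1 ≤ e)
    (A B : ZMod (p ^ e)) :
    Nat.card {q : ZMod (p ^ e) × ZMod (p ^ e) //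
        (p : ZMod (p ^ e)) ∣ q.1 ∧ (p : ZMod (p ^ e)) ∣ q.2 ∧
        q.2 = q.1 ^ 3 + A * q.1 * q.2 ^ 2 + B * q.2 ^ 3} =
      p ^ (e - 1) := by
  haveI : NeZero (p ^ e) := ⟨pow_ne_zero e hp.ne_zero⟩
  -- 1 - u is a unit whenever p ∣ u, since p is nilpotent
  have hunit : ∀ u : ZMod (p ^ e), (p : ZMod (p ^ e)) ∣ u → IsUnit (1 - u) := by
    rintro u ⟨c, rfl⟩
    exact IsNilpotent.isUnit_one_sub
      ⟨e, by rw [mul_pow, ← Nat.cast_pow, ZMod.natCast_self, zero_mul]⟩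
  -- for each X divisible by p there is a unique admissible Z
  have key : ∀ X : ZMod (p ^ e), (p : ZMod (p ^ e)) ∣ X →
      ∃! Z : ZMod (p ^ e), (p : ZMod (p ^ e)) ∣ Z ∧
        Z = X ^ 3 + A * X * Z ^ 2 + B * Z ^ 3 := by
    intro X hX
    have hg : ∀ z : ZMod (p ^ e), (p : ZMod (p ^ e)) ∣ z →
        (p : ZMod (p ^ e)) ∣ z - A * X * z ^ 2 - B * z ^ 3 := by
      intro z hz
      exact (hz.sub ((hX.mul_left A).mul_right _)).sub
        ((hz.pow (by norm_num)).mul_left B)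
    let g : {z : ZMod (p ^ e) // (p : ZMod (p ^ e)) ∣ z} →
        {z : ZMod (p ^ e) // (p : ZMod (p ^ e)) ∣ z} :=
      fun z => ⟨z.1 - A * X * z.1 ^ 2 - B * z.1 ^ 3, hg z.1 z.2⟩
    have gval : ∀ z, (g z).1 = z.1 - A * X * z.1 ^ 2 - B * z.1 ^ 3 := fun _ => rfl
    have ginj : Function.Injective g := by
      intro z₁ z₂ h
      have h' : z₁.1 - A * X * z₁.1 ^ 2 - B * z₁.1 ^ 3
          = z₂.1 - A * X * z₂.1 ^ 2 - B * z₂.1 ^ 3 := by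
        rw [← gval, ← gval, h]
      have hu : IsUnit (1 - (A * X * (z₁.1 + z₂.1)
          + B * (z₁.1 ^ 2 + z₁.1 * z₂.1 + z₂.1 ^ 2))) :=
        hunit _ (((hX.mul_left A).mul_right _).add
          ((((z₁.2.pow (by norm_num)).add ((z₁.2).mul_right z₂.1)).add
            (z₂.2.pow (by norm_num))).mul_left B))
      have h0 := hu.mul_left_cancel (b := z₁.1 - z₂.1) (c := 0)
        (by rw [mul_zero]; linear_combination h')
      exact Subtype.ext (sub_eq_zero.mp h0)
    have gsurj : Function.Surjective g := Finite.surjective_of_injective ginj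
    obtain ⟨Z, hZ⟩ := gsurj ⟨X ^ 3, hX.pow (by norm_num)⟩
    have hZval : Z.1 - A * X * Z.1 ^ 2 - B * Z.1 ^ 3 = X ^ 3 := by
      rw [← gval, hZ]
    refine ⟨Z.1, ⟨Z.2, by linear_combination hZval⟩, ?_⟩
    rintro Z' ⟨hZ'd, hZ'e⟩
    have h2 : g ⟨Z', hZ'd⟩ = g Z := by
      apply Subtype.ext
      rw [gval, gval, hZval]
      linear_combination hZ'e
    exact congrArg Subtype.val (ginj h2)
  -- the projection to X is a bijection onto {X // p ∣ X}
  have hproj : Function.Bijective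
      (fun q : {q : ZMod (p ^ e) × ZMod (p ^ e) //
        (p : ZMod (p ^ e)) ∣ q.1 ∧ (p : ZMod (p ^ e)) ∣ q.2 ∧
        q.2 = q.1 ^ 3 + A * q.1 * q.2 ^ 2 + B * q.2 ^ 3} =>
        (⟨q.1.1, q.2.1⟩ : {x : ZMod (p ^ e) // (p : ZMod (p ^ e)) ∣ x})) := by
    constructor
    · rintro ⟨⟨X₁, Z₁⟩, h₁, h₂, h₃⟩ ⟨⟨X₂, Z₂⟩, h₁', h₂', h₃'⟩ h
      simp only [Subtype.mk.injEq] at h ⊢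
      subst h
      obtain ⟨Z, -, hZu⟩ := key X₁ h₁
      have : Z₁ = Z₂ := (hZu Z₁ ⟨h₂, h₃⟩).trans (hZu Z₂ ⟨h₂', h₃'⟩).symm
      simp [Prod.ext_iff, this]
    · rintro ⟨X, hX⟩
      obtain ⟨Z, ⟨hZd, hZe⟩, -⟩ := key X hX
      exact ⟨⟨⟨X, Z⟩, hX, hZd, hZe⟩, rfl⟩
  rw [Nat.card_congr (Equiv.ofBijective _ hproj)]
  exact card_dvd_subtype hp he
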